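/- Let L ∈ GL(d,ℤ) be an Anosov automorphism, and let f be a C^∞ Anosov diffeomorphism of 𝕋^d homotopic to L that is conjugate to L by a conjugacy h which is a C¹ diffeomorphism. Then for every ε > 0 there exist a C^∞ diffeomorphism h̃ of 𝕋^d and a C^∞ Anosov diffeomorphism f̃ of 𝕋^d homotopic to L such that h̃ conjugates f to f̃ and the lift F̃ of f̃ satisfies sup_x (‖F̃(x) − Lx‖ + ‖DF̃(x) − L‖) < ε. -/

import Mathlib

noncomputable section

/-- The ambient Euclidean space `ℝ^d`. -/
abbrev Vd (d : ℕ) := EuclideanSpace ℝ (Fin d)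

/-- The inclusion `ℤ^d → ℝ^d` of integer vectors. -/
def intVec {d : ℕ} (mv : Fin d → ℤ) : Vd d :=
  (EuclideanSpace.equiv (Fin d) ℝ).symm (fun i => (mv i : ℝ))

/-- The linear action of an integer matrix on `ℝ^d`. -/
def LmapR {d : ℕ} (L : Matrix (Fin d) (Fin d) ℤ) : Vd d → Vd d :=
  fun x => Matrix.toEuclideanLin (L.map (Int.cast : ℤ → ℝ)) x

/-- The linear action of an integer matrix on `ℝ^d`, as a continuous linear map. -/
def LCLM {d : ℕ} (L : Matrix (Fin d) (Fin d) ℤ) : Vd d →L[ℝ] Vd d :=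
  Matrix.toEuclideanCLM (𝕜 := ℝ) (L.map (Int.cast : ℤ → ℝ))

/-- The multiset of moduli of the complex eigenvalues of a real matrix,
with algebraic multiplicity. -/
def eigModuli {d : ℕ} (B : Matrix (Fin d) (Fin d) ℝ) : Multiset ℝ :=
  ((B.map (algebraMap ℝ ℂ)).charpoly.roots).map (fun z => ‖z‖)

/-- `L ∈ GL(d,ℤ)` is an Anosov (hyperbolic) automorphism of `𝕋^d`:
`det L = ±1` and `L` has no complex eigenvalue of modulus `1`. -/
def IsAnosovAuto {d : ℕ} (L : Matrix (Fin d) (Fin d) ℤ) : Prop :=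
  IsUnit L.det ∧ ∀ r ∈ eigModuli (L.map (Int.cast : ℤ → ℝ)), r ≠ 1

/-- `F : ℝ^d → ℝ^d` is a lift of a torus map homotopic to `L`:
`F(x + m) = F(x) + Lm` for all integer vectors `m`. -/
def IsLiftOf {d : ℕ} (F : Vd d → Vd d) (L : Matrix (Fin d) (Fin d) ℤ) : Prop :=
  ∀ x : Vd d, ∀ mv : Fin d → ℤ, F (x + intVec mv) = F x + intVec (L.mulVec mv)

/-- `F` is a `C^r` diffeomorphism of `ℝ^d`. -/
def IsCrDiffeo {d : ℕ} (r : ℕ∞) (F : Vd d → Vd d) : Prop :=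
  ContDiff ℝ r F ∧ Function.Bijective F ∧ ContDiff ℝ r (Function.invFun F)

/-- The iterated derivative cocycle `D_xF^n = DF(F^{n-1}x) ⋯ DF(x)`. -/
def DIter {d : ℕ} (F : Vd d → Vd d) : ℕ → Vd d → (Vd d →L[ℝ] Vd d)
  | 0, _ => ContinuousLinearMap.id ℝ (Vd d)
  | n + 1, x => (DIter F n (F x)).comp (fderiv ℝ F x)

/-- `x` is (a lift of) a periodic point of period `n`: `F^n(x) - x ∈ ℤ^d`. -/
def IsPeriodicPt {d : ℕ} (F : Vd d → Vd d) (n : ℕ) (x : Vd d) : Prop :=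
  ∃ mv : Fin d → ℤ, F^[n] x = x + intVec mv

/-- `Es, Eu` witness that (the lift) `F` is Anosov: a continuous `ℤ^d`-periodic
`DF`-invariant splitting `ℝ^d = E^s(x) ⊕ E^u(x)` with uniform contraction on `E^s`
and uniform expansion on `E^u`. -/
def AnosovData {d : ℕ} (F : Vd d → Vd d) (Es Eu : Vd d → Submodule ℝ (Vd d)) : Prop :=
  (∀ x, Es x ⊓ Eu x = ⊥) ∧ (∀ x, Es x ⊔ Eu x = ⊤) ∧
  (∀ x : Vd d, ∀ mv : Fin d → ℤ, Es (x + intVec mv) = Es x ∧ Eu (x + intVec mv) = Eu x) ∧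
  (∃ P : Vd d → Vd d →L[ℝ] Vd d, Continuous P ∧
    (∀ x, ∀ v ∈ Es x, P x v = v) ∧ (∀ x, ∀ v ∈ Eu x, P x v = 0)) ∧
  (∀ x, (Es x).map (fderiv ℝ F x).toLinearMap = Es (F x)) ∧
  (∀ x, (Eu x).map (fderiv ℝ F x).toLinearMap = Eu (F x)) ∧
  ∃ C : ℝ, 0 < C ∧ ∃ μ : ℝ, μ ∈ Set.Ioo (0 : ℝ) 1 ∧
    ∀ x : Vd d, ∀ n : ℕ,
      (∀ v ∈ Es x, ‖DIter F n x v‖ ≤ C * μ ^ n * ‖v‖) ∧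
      (∀ v ∈ Eu x, ‖v‖ ≤ C * μ ^ n * ‖DIter F n x v‖)

/-- `F` is (the lift of) an Anosov diffeomorphism. -/
def IsAnosovLift {d : ℕ} (F : Vd d → Vd d) : Prop :=
  ∃ Es Eu : Vd d → Submodule ℝ (Vd d), AnosovData F Es Eu

/-- `H` is (the lift of) a conjugacy between the torus maps with lifts `F` and `G`:
`H` is a homeomorphism of `ℝ^d` commuting with integer translations
(i.e. `H = id + v` with `v` continuous and `ℤ^d`-periodic) with `H ∘ F = G ∘ H`. -/
def IsConjugacyLift {d : ℕ} (H F G : Vd d → Vd d) : Prop :=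
  Continuous H ∧ Function.Bijective H ∧ Continuous (Function.invFun H) ∧
  (∀ x : Vd d, ∀ mv : Fin d → ℤ, H (x + intVec mv) = H x + intVec mv) ∧
  ∀ x, H (F x) = G (H x)

/-- `f` and `g` (with lifts `F`, `G`) have the same periodic data with respect to the
conjugacy `H`: for every periodic point `x` of period `n`, `D_xF^n` is conjugate in
`GL(d,ℝ)` to `D_{H(x)}G^n`. -/
def SamePeriodicData {d : ℕ} (F G H : Vd d → Vd d) : Prop :=
  ∀ x : Vd d, ∀ n : ℕ, 0 < n → IsPeriodicPt F n x →
    ∃ S : Vd d ≃ₗ[ℝ] Vd d, ∀ v, DIter F n x (S v) = S (DIter G n (H x) v)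

/-- `f` (with lift `F`) has the same periodic data as `L`: for every periodic point `x`
of period `n`, `D_xF^n` is conjugate in `GL(d,ℝ)` to `L^n`. -/
def SamePeriodicDataAsAuto {d : ℕ} (F : Vd d → Vd d) (L : Matrix (Fin d) (Fin d) ℤ) : Prop :=
  ∀ x : Vd d, ∀ n : ℕ, 0 < n → IsPeriodicPt F n x →
    ∃ S : Vd d ≃ₗ[ℝ] Vd d, ∀ v,
      DIter F n x (S v) = S (Matrix.toEuclideanLin ((L.map (Int.cast : ℤ → ℝ)) ^ n) v)

/-- `H` is (the lift of) a `C^{1+Hölder}` diffeomorphism: a `C¹` diffeomorphism whose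
derivative is `α`-Hölder for some `α > 0`. -/
def IsC1HolderDiffeo {d : ℕ} (H : Vd d → Vd d) : Prop :=
  ContDiff ℝ 1 H ∧ Function.Bijective H ∧ ContDiff ℝ 1 (Function.invFun H) ∧
  ∃ α : ℝ, 0 < α ∧ ∃ C : ℝ, 0 < C ∧ ∀ x y : Vd d,
    ‖fderiv ℝ H x - fderiv ℝ H y‖ ≤ C * ‖x - y‖ ^ α


/-!
Write `H = id + v` with `v` a `C¹` `ℤ^d`-periodic map. Mollifying `v` gives a `C^∞` periodic `s`
that is `C¹`-close to `v`, so `H̃ = id + s` is `C¹`-close to `H`. Since `DH` has a uniformly bounded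
inverse, `H̃` is still a diffeomorphism: `H̃ ∘ H⁻¹` is a small Lipschitz perturbation of the
identity. The map `F̃ = H̃ ∘ F ∘ H̃⁻¹` is smoothly conjugate to `F`, hence Anosov (with the splitting
pushed forward by `DH̃`), and it is `C¹`-close to `H ∘ F ∘ H⁻¹ = L`: at `x = H̃ y` both
`DF̃(x) = DH̃(Fy) DF(y) DH̃(y)⁻¹` and `L = DH(Fy) DF(y) DH(y)⁻¹` are conjugates of `DF(y)`, by
nearby operators.
-/

open scoped ContDiff NNReal

variable {d : ℕ}

def IsZdPeriodic {E : Type*} (g : Vd d → E) : Prop :=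
  ∀ x : Vd d, ∀ mv : Fin d → ℤ, g (x + intVec mv) = g x

def IsZdEquivariant (G : Vd d → Vd d) : Prop :=
  ∀ x : Vd d, ∀ mv : Fin d → ℤ, G (x + intVec mv) = G x + intVec mv

section Periodic

variable {E : Type*} [NormedAddCommGroup E]

theorem exists_isCompact_forall_exists_add_intVec_mem :
    ∃ K : Set (Vd d), IsCompact K ∧ ∀ x : Vd d, ∃ mv : Fin d → ℤ, x + intVec mv ∈ K := by
  refine ⟨(EuclideanSpace.equiv (Fin d) ℝ).symm '' Set.Icc 0 1,
    isCompact_Icc.image (ContinuousLinearEquiv.continuous _), fun x => ⟨fun i => -⌊x i⌋, ?_⟩⟩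
  refine ⟨fun i => Int.fract (x i),
    ⟨fun i => Int.fract_nonneg _, fun i => (Int.fract_lt_one _).le⟩, ?_⟩
  ext i
  simp [intVec, Int.fract, sub_eq_add_neg]

theorem IsZdPeriodic.exists_bound {g : Vd d → E} (hg : IsZdPeriodic g) (hc : Continuous g) :
    ∃ M, 0 < M ∧ ∀ x, ‖g x‖ ≤ M := by
  obtain ⟨K, hK, hmem⟩ := exists_isCompact_forall_exists_add_intVec_mem (d := d)
  obtain ⟨M, hM⟩ := hK.exists_bound_of_continuousOn hc.continuousOn
  refine ⟨max M 1, by positivity, fun x => ?_⟩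
  obtain ⟨mv, hx⟩ := hmem x
  rw [← hg x mv]
  exact (hM _ hx).trans (le_max_left _ _)

theorem IsZdPeriodic.uniformContinuous {g : Vd d → E} (hg : IsZdPeriodic g)
    (hc : Continuous g) : UniformContinuous g := by
  obtain ⟨K, hK, hmem⟩ := exists_isCompact_forall_exists_add_intVec_mem (d := d)
  have hUC := (hK.cthickening (r := 1)).uniformContinuousOn_of_continuous hc.continuousOn
  rw [Metric.uniformContinuousOn_iff] at hUC
  rw [Metric.uniformContinuous_iff]
  intro ε hε
  obtain ⟨δ, hδ, hclose⟩ := hUC ε hε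
  refine ⟨min δ 1, by positivity, fun {x y} hxy => ?_⟩
  obtain ⟨mv, hx⟩ := hmem x
  have hxy' : dist (x + intVec mv) (y + intVec mv) < min δ 1 := by rwa [dist_add_right]
  have hy : y + intVec mv ∈ Metric.cthickening 1 K :=
    Metric.mem_cthickening_of_dist_le _ _ _ _ hx
      (by rw [dist_comm]; exact hxy'.le.trans (min_le_right _ _))
  have := hclose _ (Metric.self_subset_cthickening K hx) _ hy (hxy'.trans_le (min_le_left _ _))
  rwa [hg x mv, hg y mv] at this

end Periodic

theorem fderiv_add_eq_of_forall_add_eq {E F : Type*} [NormedAddCommGroup E] [NormedSpace ℝ E]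
    [NormedAddCommGroup F] [NormedSpace ℝ F] {f : E → F} {c : E} {c' : F}
    (h : ∀ y, f (y + c) = f y + c') (x : E) : fderiv ℝ f (x + c) = fderiv ℝ f x := by
  rw [← fderiv_comp_add_right, funext h, fderiv_add_const]

theorem IsZdPeriodic.isZdPeriodic_fderiv {F : Type*} [NormedAddCommGroup F] [NormedSpace ℝ F]
    {g : Vd d → F} (hg : IsZdPeriodic g) : IsZdPeriodic (fderiv ℝ g) := fun x _ =>
  fderiv_add_eq_of_forall_add_eq (c' := 0) (fun y => by rw [hg, add_zero]) x

theorem IsZdEquivariant.isZdPeriodic_fderiv {G : Vd d → Vd d} (hG : IsZdEquivariant G) :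
    IsZdPeriodic (fderiv ℝ G) := fun x mv =>
  fderiv_add_eq_of_forall_add_eq (fun y => hG y mv) x

theorem IsLiftOf.isZdPeriodic_fderiv {F : Vd d → Vd d} {L : Matrix (Fin d) (Fin d) ℤ}
    (hF : IsLiftOf F L) : IsZdPeriodic (fderiv ℝ F) := fun x mv =>
  fderiv_add_eq_of_forall_add_eq (fun y => hF y mv) x

theorem IsZdEquivariant.invFun {G : Vd d → Vd d} (hG : IsZdEquivariant G)
    (hbij : Function.Bijective G) : IsZdEquivariant (Function.invFun G) := fun y mv => by
  apply hbij.injective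
  rw [hG, Function.rightInverse_invFun hbij.surjective,
    Function.rightInverse_invFun hbij.surjective]

theorem IsZdEquivariant.isZdPeriodic_sub_id {G : Vd d → Vd d} (hG : IsZdEquivariant G) :
    IsZdPeriodic (fun x => G x - x) := fun x mv => by
  simp only [hG x mv]
  abel

theorem IsZdPeriodic.isZdEquivariant_id_add {s : Vd d → Vd d} (hs : IsZdPeriodic s) :
    IsZdEquivariant (fun x => x + s x) := fun x mv => by
  simp only [hs x mv]
  abel

theorem IsLiftOf.conj {F G G' : Vd d → Vd d} {L : Matrix (Fin d) (Fin d) ℤ} (hF : IsLiftOf F L)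
    (hG : IsZdEquivariant G) (hG' : IsZdEquivariant G') : IsLiftOf (G ∘ F ∘ G') L :=
  fun x mv => by simp only [Function.comp_apply, hG' x mv, hF _ mv, hG _ _]

theorem Function.invFun_invFun_of_bijective {α β : Type*} [Nonempty α] [Nonempty β] {f : α → β}
    (hf : Function.Bijective f) : Function.invFun (Function.invFun f) = f :=
  Function.invFun_eq_of_injective_of_rightInverse
    (Function.rightInverse_invFun hf.surjective).injective
    (Function.leftInverse_invFun hf.injective)

theorem Function.invFun_comp_of_bijective {α β γ : Type*} [Nonempty α] [Nonempty β] {f : β → γ}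
    {g : α → β} (hf : Function.Bijective f) (hg : Function.Bijective g) :
    Function.invFun (f ∘ g) = Function.invFun g ∘ Function.invFun f :=
  Function.invFun_eq_of_injective_of_rightInverse (hf.injective.comp hg.injective) fun y => by
    simp only [Function.comp_apply, Function.rightInverse_invFun hg.surjective _,
      Function.rightInverse_invFun hf.surjective _]

namespace IsCrDiffeo

variable {r : ℕ∞} {F G G' : Vd d → Vd d}

theorem of_le (hG : IsCrDiffeo r G) {s : ℕ∞} (hsr : s ≤ r) : IsCrDiffeo s G :=
  ⟨hG.1.of_le (by exact_mod_cast hsr), hG.2.1, hG.2.2.of_le (by exact_mod_cast hsr)⟩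

theorem invFun (hG : IsCrDiffeo r G) : IsCrDiffeo r (Function.invFun G) := by
  refine ⟨hG.2.2, ⟨(Function.rightInverse_invFun hG.2.1.surjective).injective,
    (Function.leftInverse_invFun hG.2.1.injective).surjective⟩, ?_⟩
  rw [Function.invFun_invFun_of_bijective hG.2.1]
  exact hG.1

theorem comp (hG : IsCrDiffeo r G) (hG' : IsCrDiffeo r G') : IsCrDiffeo r (G ∘ G') := by
  refine ⟨hG.1.comp hG'.1, hG.2.1.comp hG'.2.1, ?_⟩
  rw [Function.invFun_comp_of_bijective hG.2.1 hG'.2.1]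
  exact hG'.2.2.comp hG.2.2

theorem invFun_apply (hG : IsCrDiffeo r G) (x : Vd d) : Function.invFun G (G x) = x :=
  Function.leftInverse_invFun hG.2.1.injective x

theorem apply_invFun (hG : IsCrDiffeo r G) (y : Vd d) : G (Function.invFun G y) = y :=
  Function.rightInverse_invFun hG.2.1.surjective y

def toHomeomorph (hG : IsCrDiffeo r G) : Vd d ≃ₜ Vd d where
  toFun := G
  invFun := Function.invFun G
  left_inv := hG.invFun_apply
  right_inv := hG.apply_invFun
  continuous_toFun := hG.1.continuous
  continuous_invFun := hG.2.2.continuous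

theorem differentiable (hG : IsCrDiffeo 1 G) : Differentiable ℝ G :=
  hG.1.differentiable (by simp)

theorem fderiv_invFun_mul_fderiv (hG : IsCrDiffeo 1 G) (x : Vd d) :
    fderiv ℝ (Function.invFun G) (G x) * fderiv ℝ G x = 1 := by
  rw [ContinuousLinearMap.mul_def,
    ← fderiv_comp x (hG.invFun.differentiable _) (hG.differentiable x),
    Function.invFun_comp hG.2.1.injective, fderiv_id]
  rfl

theorem fderiv_mul_fderiv_invFun (hG : IsCrDiffeo 1 G) (x : Vd d) :
    fderiv ℝ G x * fderiv ℝ (Function.invFun G) (G x) = 1 := by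
  have h := fderiv_comp (G x) (hG.differentiable (Function.invFun G (G x)))
    (hG.invFun.differentiable (G x))
  rw [(Function.rightInverse_invFun hG.2.1.surjective).comp_eq_id, fderiv_id,
    hG.invFun_apply] at h
  rw [ContinuousLinearMap.mul_def, ← h]
  rfl

theorem fderiv_invFun_fderiv_apply (hG : IsCrDiffeo 1 G) (x u : Vd d) :
    fderiv ℝ (Function.invFun G) (G x) (fderiv ℝ G x u) = u := by
  simpa using congr($(hG.fderiv_invFun_mul_fderiv x) u)

theorem fderiv_fderiv_invFun_apply (hG : IsCrDiffeo 1 G) (x u : Vd d) :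
    fderiv ℝ G x (fderiv ℝ (Function.invFun G) (G x) u) = u := by
  simpa using congr($(hG.fderiv_mul_fderiv_invFun x) u)

theorem fderiv_conj_mul_fderiv (hG : IsCrDiffeo 1 G) (hF : Differentiable ℝ F) (y : Vd d) :
    fderiv ℝ (G ∘ F ∘ Function.invFun G) (G y) * fderiv ℝ G y =
      fderiv ℝ G (F y) * fderiv ℝ F y := by
  have hconj : (G ∘ F ∘ Function.invFun G) ∘ G = G ∘ F := by
    funext x
    simp [hG.invFun_apply]
  have hd : DifferentiableAt ℝ (G ∘ F ∘ Function.invFun G) (G y) :=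
    (hG.differentiable _).comp _ ((hF _).comp _ (hG.invFun.differentiable _))
  rw [ContinuousLinearMap.mul_def, ContinuousLinearMap.mul_def,
    ← fderiv_comp y hd (hG.differentiable y), hconj,
    fderiv_comp y (hG.differentiable _) (hF y)]

theorem DIter_conj_apply (hG : IsCrDiffeo 1 G) (hF : Differentiable ℝ F) (n : ℕ) (y u : Vd d) :
    DIter (G ∘ F ∘ Function.invFun G) n (G y) (fderiv ℝ G y u) =
      fderiv ℝ G (F^[n] y) (DIter F n y u) := by
  induction n generalizing y u with
  | zero => rfl
  | succ n ih =>
    have hstep : fderiv ℝ (G ∘ F ∘ Function.invFun G) (G y) (fderiv ℝ G y u) =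
        fderiv ℝ G (F y) (fderiv ℝ F y u) := congr($(hG.fderiv_conj_mul_fderiv hF y) u)
    simp only [DIter, ContinuousLinearMap.comp_apply, hstep, Function.comp_apply,
      hG.invFun_apply, ih, Function.iterate_succ_apply]

theorem map_fderiv_conj (hG : IsCrDiffeo 1 G) (hF : Differentiable ℝ F)
    {E : Vd d → Submodule ℝ (Vd d)} (hE : ∀ x, (E x).map (fderiv ℝ F x).toLinearMap = E (F x))
    (y : Vd d) :
    ((E y).map (fderiv ℝ G y).toLinearMap).map
        (fderiv ℝ (G ∘ F ∘ Function.invFun G) (G y)).toLinearMap =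
      (E (F y)).map (fderiv ℝ G (F y)).toLinearMap := by
  rw [← Submodule.map_comp, ← ContinuousLinearMap.toLinearMap_comp,
    ← ContinuousLinearMap.mul_def, hG.fderiv_conj_mul_fderiv hF,
    ContinuousLinearMap.mul_def, ContinuousLinearMap.toLinearMap_comp, Submodule.map_comp, hE]

end IsCrDiffeo

def pushforwardSubspaces (G : Vd d → Vd d) (E : Vd d → Submodule ℝ (Vd d)) :
    Vd d → Submodule ℝ (Vd d) :=
  fun x => (E (Function.invFun G x)).map (fderiv ℝ G (Function.invFun G x)).toLinearMap

theorem IsCrDiffeo.exists_DIter_bounds_conj {F G : Vd d → Vd d} {Es Eu : Vd d → Submodule ℝ (Vd d)}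
    (hG : IsCrDiffeo 1 G) (hGZ : IsZdEquivariant G) (hF : Differentiable ℝ F) {C μ : ℝ}
    (hC : 0 < C) (hμ : 0 < μ)
    (hest : ∀ x n, (∀ v ∈ Es x, ‖DIter F n x v‖ ≤ C * μ ^ n * ‖v‖) ∧
      (∀ v ∈ Eu x, ‖v‖ ≤ C * μ ^ n * ‖DIter F n x v‖)) :
    ∃ C' : ℝ, 0 < C' ∧ ∀ x n,
      (∀ v ∈ pushforwardSubspaces G Es x,
        ‖DIter (G ∘ F ∘ Function.invFun G) n x v‖ ≤ C' * μ ^ n * ‖v‖) ∧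
      (∀ v ∈ pushforwardSubspaces G Eu x,
        ‖v‖ ≤ C' * μ ^ n * ‖DIter (G ∘ F ∘ Function.invFun G) n x v‖) := by
  obtain ⟨M₁, hM₁, hbd₁⟩ :=
    hGZ.isZdPeriodic_fderiv.exists_bound (hG.1.continuous_fderiv (by simp))
  obtain ⟨M₂, hM₂, hbd₂⟩ := (hGZ.invFun hG.2.1).isZdPeriodic_fderiv.exists_bound
    (hG.invFun.1.continuous_fderiv (by simp))
  have hlow : ∀ y u, ‖u‖ ≤ M₂ * ‖fderiv ℝ G y u‖ := fun y u => by
    simpa only [hG.fderiv_invFun_fderiv_apply] using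
      (fderiv ℝ (Function.invFun G) (G y)).le_of_opNorm_le (hbd₂ _) (fderiv ℝ G y u)
  refine ⟨C * (M₁ * M₂), by positivity, fun x n => ?_⟩
  obtain ⟨y, rfl⟩ := hG.2.1.surjective x
  simp only [pushforwardSubspaces, hG.invFun_apply]
  refine ⟨fun v hv => ?_, fun v hv => ?_⟩ <;> obtain ⟨u, hu, rfl⟩ := hv <;>
    simp only [ContinuousLinearMap.coe_coe, hG.DIter_conj_apply hF]
  · calc ‖fderiv ℝ G (F^[n] y) (DIter F n y u)‖ ≤ M₁ * ‖DIter F n y u‖ :=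
          (fderiv ℝ G _).le_of_opNorm_le (hbd₁ _) _
      _ ≤ M₁ * (C * μ ^ n * (M₂ * ‖fderiv ℝ G y u‖)) := by
          gcongr
          exact ((hest y n).1 u hu).trans (by gcongr; exact hlow y u)
      _ = C * (M₁ * M₂) * μ ^ n * ‖fderiv ℝ G y u‖ := by ring
  · calc ‖fderiv ℝ G y u‖ ≤ M₁ * ‖u‖ := (fderiv ℝ G y).le_of_opNorm_le (hbd₁ _) _
      _ ≤ M₁ * (C * μ ^ n * (M₂ * ‖fderiv ℝ G (F^[n] y) (DIter F n y u)‖)) := by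
          gcongr
          exact ((hest y n).2 u hu).trans (by gcongr; exact hlow _ _)
      _ = C * (M₁ * M₂) * μ ^ n * ‖fderiv ℝ G (F^[n] y) (DIter F n y u)‖ := by ring

theorem AnosovData.conj {F G : Vd d → Vd d} {Es Eu : Vd d → Submodule ℝ (Vd d)}
    (h : AnosovData F Es Eu) (hF : Differentiable ℝ F) (hG : IsCrDiffeo 1 G)
    (hGZ : IsZdEquivariant G) :
    AnosovData (G ∘ F ∘ Function.invFun G) (pushforwardSubspaces G Es)
      (pushforwardSubspaces G Eu) := by
  obtain ⟨hinf, hsup, hper, ⟨P, hPc, hPs, hPu⟩, hEs, hEu, C, hC, μ, hμ, hest⟩ := h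
  obtain ⟨C', hC', hest'⟩ := hG.exists_DIter_bounds_conj hGZ hF hC hμ.1 hest
  have hinj : ∀ y, Function.Injective (fderiv ℝ G y) := fun y =>
    Function.LeftInverse.injective (hG.fderiv_invFun_fderiv_apply y)
  have hsurj : ∀ y, Function.Surjective (fderiv ℝ G y) := fun y w =>
    ⟨_, hG.fderiv_fderiv_invFun_apply y w⟩
  refine ⟨fun x => ?_, fun x => ?_, fun x mv => ?_, ⟨fun x => fderiv ℝ G (Function.invFun G x) *
      P (Function.invFun G x) * fderiv ℝ (Function.invFun G) x, ?_, fun x v hv => ?_,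
      fun x v hv => ?_⟩, fun x => ?_, fun x => ?_, C', hC', μ, hμ, hest'⟩
  · rw [pushforwardSubspaces, pushforwardSubspaces, ← Submodule.map_inf _ (hinj _), hinf,
      Submodule.map_bot]
  · rw [pushforwardSubspaces, pushforwardSubspaces, ← Submodule.map_sup, hsup, Submodule.map_top,
      LinearMap.range_eq_top]
    exact hsurj _
  · simp only [pushforwardSubspaces, (hGZ.invFun hG.2.1) x mv, hGZ.isZdPeriodic_fderiv _ mv,
      hper _ mv, and_self]
  · exact (((hG.1.continuous_fderiv (by simp)).comp hG.invFun.1.continuous).mul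
      (hPc.comp hG.invFun.1.continuous)).mul (hG.invFun.1.continuous_fderiv (by simp))
  all_goals obtain ⟨y, rfl⟩ := hG.2.1.surjective x
  all_goals simp only [pushforwardSubspaces, hG.invFun_apply] at *
  · obtain ⟨u, hu, rfl⟩ := hv
    simp [hG.fderiv_invFun_fderiv_apply, hPs y u hu]
  · obtain ⟨u, hu, rfl⟩ := hv
    simp [hG.fderiv_invFun_fderiv_apply, hPu y u hu]
  · simpa [hG.invFun_apply] using hG.map_fderiv_conj hF hEs y
  · simpa [hG.invFun_apply] using hG.map_fderiv_conj hF hEu y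

theorem IsAnosovLift.conj {F G : Vd d → Vd d} (hAn : IsAnosovLift F) (hF : Differentiable ℝ F)
    (hG : IsCrDiffeo 1 G) (hGZ : IsZdEquivariant G) :
    IsAnosovLift (G ∘ F ∘ Function.invFun G) :=
  let ⟨_, _, h⟩ := hAn
  ⟨_, _, h.conj hF hG hGZ⟩

section NormedRing

variable {R : Type*} [NormedRing R]

theorem isUnit_of_norm_mul_sub_lt_one [CompleteSpace R] {r s s' : R} (hrs : r * s = 1)
    (hsr : s * r = 1) (h : ‖r * (s - s')‖ < 1) : IsUnit s' := by
  have hs' : s' = s * (1 - r * (s - s')) := by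
    rw [mul_sub, mul_one, ← mul_assoc, hsr, one_mul, sub_sub_cancel]
  rw [hs']
  exact (Units.isUnit ⟨s, r, hsr, hrs⟩).mul (isUnit_one_sub_of_norm_lt_one h)

theorem norm_le_two_mul_of_mul_eq_one {r s s' r' : R} (hrs : r * s = 1) (hsr' : s' * r' = 1)
    {K η : ℝ} (hr : ‖r‖ ≤ K) (hs : ‖s - s'‖ ≤ η) (hKη : K * η ≤ 1 / 2) : ‖r'‖ ≤ 2 * K := by
  have hr' : r' = r * (s - s') * r' + r := by
    rw [mul_sub, sub_mul, hrs, one_mul, mul_assoc, hsr', mul_one, sub_add_cancel]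
  have hK : 0 ≤ K := (norm_nonneg r).trans hr
  have : ‖r'‖ ≤ K * η * ‖r'‖ + K :=
    calc ‖r'‖ ≤ ‖r‖ * ‖s - s'‖ * ‖r'‖ + ‖r‖ := by
          conv_lhs => rw [hr']
          exact (norm_add_le _ _).trans (by gcongr; exact norm_mul₃_le)
      _ ≤ K * η * ‖r'‖ + K := by gcongr
  nlinarith [norm_nonneg r']

/-- Here `a = p' b s'⁻¹` and `l = p b s⁻¹`; the second term of the bound comes from
`s'⁻¹ - s⁻¹ = s⁻¹ (s - s') s'⁻¹`. -/
theorem norm_sub_le_of_mul_eq_mul {a l p p' b r r' s s' : R} (hrs : r * s = 1)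
    (hsr : s * r = 1) (hsr' : s' * r' = 1) (ha : a * s' = p' * b) (hl : l * s = p * b) :
    ‖a - l‖ ≤ ‖p' - p‖ * ‖b‖ * ‖r'‖ + ‖p‖ * ‖b‖ * (‖r‖ * ‖s - s'‖ * ‖r'‖) := by
  have ha' : a = p' * b * r' := by rw [← ha, mul_assoc, hsr', mul_one]
  have hl' : l = p * b * r := by rw [← hl, mul_assoc, hsr, mul_one]
  have hr' : r * (s - s') * r' = r' - r := by
    rw [mul_sub, sub_mul, hrs, one_mul, mul_assoc, hsr', mul_one]
  have e : a - l = (p' - p) * b * r' + p * b * (r * (s - s') * r') := by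
    rw [hr', ha', hl']
    noncomm_ring
  rw [e]
  refine (norm_add_le _ _).trans (add_le_add norm_mul₃_le ((norm_mul_le _ _).trans ?_))
  gcongr
  · exact norm_mul_le _ _
  · exact norm_mul₃_le

end NormedRing

theorem Homeomorph.isCrDiffeo {n : ℕ∞} (e : Vd d ≃ₜ Vd d) (he : ContDiff ℝ n e) (hn : 1 ≤ n)
    (hunit : ∀ x, IsUnit (fderiv ℝ e x)) : IsCrDiffeo n e := by
  have hinv : Function.invFun e = e.symm :=
    Function.invFun_eq_of_injective_of_rightInverse e.injective e.apply_symm_apply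
  refine ⟨he, e.bijective, hinv ▸ e.contDiff_symm
    (f₀' := fun x => ContinuousLinearEquiv.unitsEquiv ℝ (Vd d) (hunit x).unit) (fun x => ?_) he⟩
  have hx : ((ContinuousLinearEquiv.unitsEquiv ℝ (Vd d) (hunit x).unit : Vd d ≃L[ℝ] Vd d) :
      Vd d →L[ℝ] Vd d) = fderiv ℝ e x := by
    ext v
    rfl
  rw [hx]
  exact (he.differentiable (by exact_mod_cast (zero_lt_one.trans_le hn).ne') x).hasFDerivAt

/-- `G ∘ H⁻¹ - id = (G - H) ∘ H⁻¹` is `ηK`-Lipschitz, so `G ∘ H⁻¹` is a homeomorphism. -/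
theorem IsCrDiffeo.exists_homeomorph_of_fderiv_near {G H : Vd d → Vd d} (hH : IsCrDiffeo 1 H)
    (hG : Differentiable ℝ G) {K η : ℝ≥0} (hK : ∀ y, ‖fderiv ℝ (Function.invFun H) y‖₊ ≤ K)
    (hGH : ∀ x, ‖fderiv ℝ G x - fderiv ℝ H x‖₊ ≤ η) (hKη : K * η < 1) :
    ∃ e : Vd d ≃ₜ Vd d, ⇑e = G := by
  have hw : LipschitzWith η (fun x => G x - H x) :=
    lipschitzWith_of_nnnorm_fderiv_le (hG.sub hH.differentiable) fun x => by
      rw [fderiv_fun_sub (hG x) (hH.differentiable x)]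
      exact hGH x
  have hperturb : (G ∘ Function.invFun H) - ⇑(ContinuousLinearMap.id ℝ (Vd d)) =
      (fun x => G x - H x) ∘ Function.invFun H := by
    funext y
    simp [hH.apply_invFun]
  have happrox : ApproximatesLinearOn (G ∘ Function.invFun H)
      ((ContinuousLinearEquiv.refl ℝ (Vd d) : Vd d →L[ℝ] Vd d)) Set.univ (η * K) := by
    rw [ApproximatesLinearOn.approximatesLinearOn_iff_lipschitzOnWith,
      ContinuousLinearEquiv.coe_refl, hperturb]
    exact (hw.comp (lipschitzWith_of_nnnorm_fderiv_le hH.invFun.differentiable hK)).lipschitzOnWith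
  have hc : Subsingleton (Vd d) ∨
      η * K < ‖((ContinuousLinearEquiv.refl ℝ (Vd d)).symm : Vd d →L[ℝ] Vd d)‖₊⁻¹ := by
    rcases subsingleton_or_nontrivial (Vd d) with h | _
    · exact Or.inl h
    right
    rw [← NNReal.coe_lt_coe]
    push_cast
    simp only [ContinuousLinearEquiv.refl_symm, ContinuousLinearEquiv.coe_refl,
      ContinuousLinearMap.norm_id, inv_one]
    linarith [mul_comm (K : ℝ) η]
  exact ⟨hH.toHomeomorph.trans (happrox.toHomeomorph _ hc), funext fun x =>
    congrArg G (hH.invFun_apply x)⟩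

theorem IsCrDiffeo.of_fderiv_near {n : ℕ∞} {G H : Vd d → Vd d} (hH : IsCrDiffeo 1 H)
    (hG : ContDiff ℝ n G) (hn : 1 ≤ n) {K η : ℝ}
    (hK : ∀ y, ‖fderiv ℝ (Function.invFun H) y‖ ≤ K)
    (hGH : ∀ x, ‖fderiv ℝ G x - fderiv ℝ H x‖ ≤ η) (hKη : K * η < 1) : IsCrDiffeo n G := by
  have hunit : ∀ x, IsUnit (fderiv ℝ G x) := fun x =>
    isUnit_of_norm_mul_sub_lt_one (hH.fderiv_invFun_mul_fderiv x) (hH.fderiv_mul_fderiv_invFun x)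
      ((norm_mul_le _ _).trans_lt <| (mul_le_mul (hK _) (by rw [norm_sub_rev]; exact hGH x)
        (norm_nonneg _) ((norm_nonneg _).trans (hK 0))).trans_lt hKη)
  lift K to ℝ≥0 using (norm_nonneg _).trans (hK 0)
  lift η to ℝ≥0 using (norm_nonneg _).trans (hGH 0)
  obtain ⟨e, rfl⟩ := hH.exists_homeomorph_of_fderiv_near
    (hG.differentiable (by exact_mod_cast (zero_lt_one.trans_le hn).ne'))
    (fun y => by exact_mod_cast hK y) (fun x => by exact_mod_cast hGH x) (by exact_mod_cast hKη)
  exact e.isCrDiffeo hG hn hunit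

section Smoothing

open MeasureTheory

variable {V E : Type*} [NormedAddCommGroup V] [NormedSpace ℝ V] [FiniteDimensional ℝ V]
  [MeasurableSpace V] [BorelSpace V] [NormedAddCommGroup E] [NormedSpace ℝ E]

theorem hasFDerivAt_convolution_of_bounded_fderiv (μ : Measure V) [IsFiniteMeasureOnCompacts μ]
    {φ : V → ℝ} (hφ : Continuous φ) (hφc : HasCompactSupport φ) {u : V → E}
    (hu : ContDiff ℝ 1 u) {M : ℝ} (hM : ∀ x, ‖fderiv ℝ u x‖ ≤ M) (x₀ : V) :
    HasFDerivAt (convolution φ u (ContinuousLinearMap.lsmul ℝ ℝ) μ)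
      (convolution φ (fderiv ℝ u) (ContinuousLinearMap.lsmul ℝ ℝ) μ x₀) x₀ := by
  have hud : Differentiable ℝ u := hu.differentiable one_ne_zero
  have hc0 : ∀ x, Continuous fun t => φ t • u (x - t) := fun x =>
    hφ.smul (hu.continuous.comp (continuous_const.sub continuous_id))
  have hc1 : Continuous fun t => φ t • fderiv ℝ u (x₀ - t) :=
    hφ.smul ((hu.continuous_fderiv one_ne_zero).comp (continuous_const.sub continuous_id))
  have hconv : convolution φ u (ContinuousLinearMap.lsmul ℝ ℝ) μ =
      fun x => ∫ t, φ t • u (x - t) ∂μ :=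
    funext fun x => by simp only [convolution_def, ContinuousLinearMap.lsmul_apply]
  rw [hconv, convolution_def]
  simp only [ContinuousLinearMap.lsmul_apply]
  refine hasFDerivAt_integral_of_dominated_of_fderiv_le (bound := fun t => ‖φ t‖ * M)
    (F' := fun x t => φ t • fderiv ℝ u (x - t))
    Filter.univ_mem (Filter.Eventually.of_forall fun x => (hc0 x).aestronglyMeasurable)
    ((hc0 x₀).integrable_of_hasCompactSupport hφc.smul_right)
    hc1.aestronglyMeasurable
    (Filter.Eventually.of_forall fun t x _ => ?_)
    ((hφ.norm.integrable_of_hasCompactSupport hφc.norm).mul_const M)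
    (Filter.Eventually.of_forall fun t x _ => ?_)
  · rw [norm_smul]
    exact mul_le_mul_of_nonneg_left (hM _) (norm_nonneg _)
  · have h := (hud (x - t)).hasFDerivAt.comp x ((hasFDerivAt_id x).sub_const t)
    rw [ContinuousLinearMap.comp_id] at h
    exact h.const_smul (φ t)

theorem IsZdPeriodic.exists_contDiff_near [CompleteSpace E] {u : Vd d → E} (hper : IsZdPeriodic u)
    (hu : ContDiff ℝ 1 u) {η : ℝ} (hη : 0 < η) :
    ∃ s : Vd d → E, ContDiff ℝ ∞ s ∧ IsZdPeriodic s ∧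
      ∀ x, ‖s x - u x‖ ≤ η ∧ ‖fderiv ℝ s x - fderiv ℝ u x‖ ≤ η := by
  have hDuc := hu.continuous_fderiv one_ne_zero
  obtain ⟨M, -, hM⟩ := hper.isZdPeriodic_fderiv.exists_bound hDuc
  obtain ⟨δ₀, hδ₀, h₀⟩ :=
    Metric.uniformContinuous_iff.1 (hper.uniformContinuous hu.continuous) η hη
  obtain ⟨δ₁, hδ₁, h₁⟩ :=
    Metric.uniformContinuous_iff.1 (hper.isZdPeriodic_fderiv.uniformContinuous hDuc) η hη
  let ψ : ContDiffBump (0 : Vd d) := ⟨min δ₀ δ₁ / 2, min δ₀ δ₁, by positivity, by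
    linarith [lt_min hδ₀ hδ₁]⟩
  refine ⟨convolution (ψ.normed volume) u (ContinuousLinearMap.lsmul ℝ ℝ) volume,
    ψ.hasCompactSupport_normed.contDiff_convolution_left _ ψ.contDiff_normed
      hu.continuous.locallyIntegrable, fun x mv => ?_, fun x => ⟨?_, ?_⟩⟩
  · simp only [convolution_def]
    congr 1
    funext t
    rw [show x + intVec mv - t = x - t + intVec mv by abel, hper]
  · rw [← dist_eq_norm]
    exact ψ.dist_normed_convolution_le hu.continuous.aestronglyMeasurable fun y hy =>
      (h₀ ((Metric.mem_ball.1 hy).trans_le (min_le_left _ _))).le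
  · rw [(hasFDerivAt_convolution_of_bounded_fderiv volume ψ.continuous_normed
      ψ.hasCompactSupport_normed hu hM x).fderiv, ← dist_eq_norm]
    exact ψ.dist_normed_convolution_le hDuc.aestronglyMeasurable fun y hy =>
      (h₁ ((Metric.mem_ball.1 hy).trans_le (min_le_right _ _))).le

end Smoothing

theorem IsZdEquivariant.exists_contDiff_near {H : Vd d → Vd d} (hHZ : IsZdEquivariant H)
    (hH : ContDiff ℝ 1 H) {η : ℝ} (hη : 0 < η) :
    ∃ G : Vd d → Vd d, ContDiff ℝ ∞ G ∧ IsZdEquivariant G ∧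
      ∀ x, ‖G x - H x‖ ≤ η ∧ ‖fderiv ℝ G x - fderiv ℝ H x‖ ≤ η := by
  obtain ⟨s, hs, hsZ, hsv⟩ :=
    hHZ.isZdPeriodic_sub_id.exists_contDiff_near (hH.sub contDiff_id) hη
  refine ⟨fun x => x + s x, contDiff_id.add hs, hsZ.isZdEquivariant_id_add, fun x => ?_⟩
  have hsd : DifferentiableAt ℝ s x := hs.differentiable (by simp) x
  have hHd : DifferentiableAt ℝ H x := hH.differentiable one_ne_zero x
  have h0 : x + s x - H x = s x - (H x - x) := by abel
  have h1 : fderiv ℝ (fun x => x + s x) x - fderiv ℝ H x =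
      fderiv ℝ s x - fderiv ℝ (fun x => H x - x) x := by
    rw [fderiv_fun_add differentiableAt_fun_id hsd, fderiv_fun_sub hHd differentiableAt_fun_id,
      fderiv_fun_id]
    abel
  rw [h0, h1]
  exact hsv x

theorem norm_conj_sub_add_norm_fderiv_conj_sub_le {F H G : Vd d → Vd d} {A : Vd d →L[ℝ] Vd d}
    (hF : Differentiable ℝ F) (hH : IsCrDiffeo 1 H) (hG : IsCrDiffeo 1 G)
    (hconj : ∀ x, H (F x) = A (H x)) {MF MH K η : ℝ}
    (hMF : ∀ x, ‖fderiv ℝ F x‖ ≤ MF) (hMH : ∀ x, ‖fderiv ℝ H x‖ ≤ MH)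
    (hK : ∀ y, ‖fderiv ℝ (Function.invFun H) y‖ ≤ K)
    (hC0 : ∀ x, ‖G x - H x‖ ≤ η) (hC1 : ∀ x, ‖fderiv ℝ G x - fderiv ℝ H x‖ ≤ η)
    (hKη : K * η ≤ 1 / 2) (x : Vd d) :
    ‖(G ∘ F ∘ Function.invFun G) x - A x‖ + ‖fderiv ℝ (G ∘ F ∘ Function.invFun G) x - A‖ ≤
      η * (1 + ‖A‖ + 2 * K * MF + 2 * K ^ 2 * MH * MF) := by
  obtain ⟨y, rfl⟩ := hG.2.1.surjective x
  have hMF0 : 0 ≤ MF := (norm_nonneg _).trans (hMF 0)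
  have hMH0 : 0 ≤ MH := (norm_nonneg _).trans (hMH 0)
  have hK0 : 0 ≤ K := (norm_nonneg _).trans (hK 0)
  have hη0 : 0 ≤ η := (norm_nonneg _).trans (hC0 0)
  have hl : A * fderiv ℝ H y = fderiv ℝ H (F y) * fderiv ℝ F y := by
    rw [ContinuousLinearMap.mul_def, ContinuousLinearMap.mul_def,
      ← fderiv_comp y (hH.differentiable _) (hF y), show H ∘ F = A ∘ H from funext hconj,
      fderiv_comp y A.differentiableAt (hH.differentiable y), A.fderiv]
  have hr' : ‖fderiv ℝ (Function.invFun G) (G y)‖ ≤ 2 * K :=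
    norm_le_two_mul_of_mul_eq_one (hH.fderiv_invFun_mul_fderiv y) (hG.fderiv_mul_fderiv_invFun y)
      (hK _) (by rw [norm_sub_rev]; exact hC1 y) hKη
  have hC0' : ‖(G ∘ F ∘ Function.invFun G) (G y) - A (G y)‖ ≤ η + ‖A‖ * η := by
    have e : (G ∘ F ∘ Function.invFun G) (G y) - A (G y) = (G (F y) - H (F y)) - A (G y - H y) := by
      simp only [Function.comp_apply, hG.invFun_apply, map_sub, hconj]
      abel
    rw [e]
    exact (norm_sub_le _ _).trans (add_le_add (hC0 _) (A.le_of_opNorm_le le_rfl _ |>.trans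
      (mul_le_mul_of_nonneg_left (hC0 _) (norm_nonneg _))))
  have hC1' := norm_sub_le_of_mul_eq_mul (hH.fderiv_invFun_mul_fderiv y)
    (hH.fderiv_mul_fderiv_invFun y) (hG.fderiv_mul_fderiv_invFun y)
    (hG.fderiv_conj_mul_fderiv hF y) hl
  calc _ ≤ (η + ‖A‖ * η) + (η * MF * (2 * K) + MH * MF * (K * η * (2 * K))) := by
        refine add_le_add hC0' (hC1'.trans (add_le_add ?_ ?_))
        · gcongr
          exacts [hC1 _, hMF _]
        · gcongr
          exacts [hMH _, hMF _, hK _, by rw [norm_sub_rev]; exact hC1 y]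
    _ = η * (1 + ‖A‖ + 2 * K * MF + 2 * K ^ 2 * MH * MF) := by ring

theorem exists_pos_mul_le_half_and_mul_lt {K B ε : ℝ} (hK : 0 < K) (hB : 0 ≤ B) (hε : 0 < ε) :
    ∃ η > 0, K * η ≤ 1 / 2 ∧ η * B < ε := by
  refine ⟨min (1 / (2 * K)) (ε / (2 * (B + 1))), by positivity,
    (mul_le_mul_of_nonneg_left (min_le_left _ _) hK.le).trans_eq (by field_simp), ?_⟩
  calc min (1 / (2 * K)) (ε / (2 * (B + 1))) * B ≤ ε / (2 * (B + 1)) * (B + 1) := by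
        gcongr
        exacts [min_le_right _ _, by linarith]
    _ < ε := by field_simp; linarith

theorem smooth_conjugate_close_to_linear_general
    {d : ℕ} (L : Matrix (Fin d) (Fin d) ℤ)
    (F : Vd d → Vd d) (hF : IsCrDiffeo ⊤ F) (hlift : IsLiftOf F L)
    (hAnosov : IsAnosovLift F)
    (H : Vd d → Vd d) (hconj : IsConjugacyLift H F (LmapR L))
    (hC1 : ContDiff ℝ 1 H ∧ Function.Bijective H ∧ ContDiff ℝ 1 (Function.invFun H))
    (ε : ℝ) (hε : 0 < ε) :
    ∃ Ht Ft : Vd d → Vd d,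
      IsCrDiffeo ⊤ Ht ∧
      (∀ x : Vd d, ∀ mv : Fin d → ℤ, Ht (x + intVec mv) = Ht x + intVec mv) ∧
      IsCrDiffeo ⊤ Ft ∧ IsLiftOf Ft L ∧ IsAnosovLift Ft ∧
      (∀ x, Ht (F x) = Ft (Ht x)) ∧
      (∀ x, ‖Ft x - LmapR L x‖ + ‖fderiv ℝ Ft x - LCLM L‖ < ε) := by
  obtain ⟨-, -, -, hHZ, hHF⟩ : _ ∧ _ ∧ _ ∧ IsZdEquivariant H ∧ _ := hconj
  have hH : IsCrDiffeo 1 H := hC1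
  have hFd : Differentiable ℝ F := (hF.of_le le_top).differentiable
  obtain ⟨MF, hMF0, hMF⟩ :=
    hlift.isZdPeriodic_fderiv.exists_bound (hF.1.continuous_fderiv (by simp))
  obtain ⟨MH, hMH0, hMH⟩ := hHZ.isZdPeriodic_fderiv.exists_bound (hH.1.continuous_fderiv (by simp))
  obtain ⟨K, hK0, hK⟩ := (hHZ.invFun hH.2.1).isZdPeriodic_fderiv.exists_bound
    (hH.invFun.1.continuous_fderiv (by simp))
  obtain ⟨η, hη, hKη, hηB⟩ := exists_pos_mul_le_half_and_mul_lt hK0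
    (show 0 ≤ 1 + ‖LCLM L‖ + 2 * K * MF + 2 * K ^ 2 * MH * MF by positivity) hε
  obtain ⟨Ht, hHts, hHtZ, hHtH⟩ := hHZ.exists_contDiff_near hH.1 hη
  have hHt : IsCrDiffeo ⊤ Ht :=
    IsCrDiffeo.of_fderiv_near hH hHts le_top hK (fun x => (hHtH x).2) (by linarith)
  refine ⟨Ht, Ht ∘ F ∘ Function.invFun Ht, hHt, hHtZ, hHt.comp (hF.comp hHt.invFun),
    hlift.conj hHtZ (hHtZ.invFun hHt.2.1), hAnosov.conj hFd (hHt.of_le le_top) hHtZ,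
    fun x => congrArg Ht (congrArg F (hHt.invFun_apply x)).symm, fun x => ?_⟩
  exact (norm_conj_sub_add_norm_fderiv_conj_sub_le (A := LCLM L) hFd hH (hHt.of_le le_top) hHF
    hMF hMH hK (fun x => (hHtH x).1) (fun x => (hHtH x).2) hKη x).trans_lt hηB

/-- **Observation (a `C¹` conjugacy can be smoothed).**
If a `C^∞` Anosov diffeomorphism `f` homotopic to `L` is conjugate to `L` by a `C¹`
diffeomorphism, then for every `ε > 0`, `f` is `C^∞` conjugate (by a `C^∞`
diffeomorphism `h̃` of the torus) to a `C^∞` Anosov diffeomorphism `f̃` homotopic to `L`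
that is `ε`-close to `L` in the `C¹` sense. -/
theorem smooth_conjugate_close_to_linear
    {d : ℕ} (L : Matrix (Fin d) (Fin d) ℤ) (hL : IsAnosovAuto L)
    (F : Vd d → Vd d) (hF : IsCrDiffeo ⊤ F) (hlift : IsLiftOf F L)
    (hAnosov : IsAnosovLift F)
    (H : Vd d → Vd d) (hconj : IsConjugacyLift H F (LmapR L))
    (hC1 : ContDiff ℝ 1 H ∧ Function.Bijective H ∧ ContDiff ℝ 1 (Function.invFun H))
    (ε : ℝ) (hε : 0 < ε) :
    ∃ Ht Ft : Vd d → Vd d,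
      IsCrDiffeo ⊤ Ht ∧
      (∀ x : Vd d, ∀ mv : Fin d → ℤ, Ht (x + intVec mv) = Ht x + intVec mv) ∧
      IsCrDiffeo ⊤ Ft ∧ IsLiftOf Ft L ∧ IsAnosovLift Ft ∧
      (∀ x, Ht (F x) = Ft (Ht x)) ∧
      (∀ x, ‖Ft x - LmapR L x‖ + ‖fderiv ℝ Ft x - LCLM L‖ < ε) :=
  smooth_conjugate_close_to_linear_general L F hF hlift hAnosov H hconj hC1 ε hε
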